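/- arXiv:2501.09200 — 6 statements merged into one kernel-verified Lean document; each statement's English description precedes it below -/
import Mathlib

section
/- Let q1, q2 : [0,∞) → ℝ be positive continuous functions with q1(r) ≤ q2(r) for all r > 0, and let C > 0. For i = 1, 2, let y_i : [0,∞) → ℝ be continuously differentiable on [0,∞) and twice differentiable on (0,∞), satisfying y_i''(r) + (1/r)·y_i'(r) + q_i(r)·y_i(r) = 0 for all r > 0, together with y_i(0) = C and y_i'(0) = 0. Assume each y_i has at least one positive root, and let R_i := inf{r > 0 : y_i(r) = 0} be its first positive root. Then R_1 ≥ R_2. -/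
open Set

lemma firstRoot_props (y : ℝ → ℝ) (hy : ContinuousOn y (Ici 0)) (C : ℝ) (hC : 0 < C)
    (h0 : y 0 = C) (hne : {r : ℝ | 0 < r ∧ y r = 0}.Nonempty) :
    0 < sInf {r : ℝ | 0 < r ∧ y r = 0} ∧ y (sInf {r : ℝ | 0 < r ∧ y r = 0}) = 0 ∧
      ∀ s, 0 ≤ s → s < sInf {r : ℝ | 0 < r ∧ y r = 0} → 0 < y s := by
  set S := {r : ℝ | 0 < r ∧ y r = 0} with hS
  have hbdd : BddBelow S := ⟨0, fun x hx => hx.1.le⟩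
  -- eventual positivity near 0
  have hcw : ContinuousWithinAt y (Ici 0) 0 := hy 0 self_mem_Ici
  have hev : ∀ᶠ x in nhdsWithin 0 (Ici 0), 0 < y x :=
    hcw.eventually (h0 ▸ eventually_gt_nhds hC)
  rw [eventually_nhdsWithin_iff, Metric.eventually_nhds_iff] at hev
  obtain ⟨δ, hδpos, hδ⟩ := hev
  have hlb : ∀ s ∈ S, δ ≤ s := by
    intro s hs
    by_contra hlt
    push_neg at hlt
    have : 0 < y s := hδ (by simp [Real.dist_eq, abs_of_nonneg hs.1.le, hlt]) hs.1.le
    exact absurd hs.2 (ne_of_gt this)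
  have hRδ : δ ≤ sInf S := le_csInf hne hlb
  have hRpos : 0 < sInf S := lt_of_lt_of_le hδpos hRδ
  -- closed superset
  have hclosed : IsClosed (Ici δ ∩ y ⁻¹' {0}) := by
    have : ContinuousOn y (Ici δ) := hy.mono (Ici_subset_Ici.mpr hδpos.le)
    exact this.preimage_isClosed_of_isClosed isClosed_Ici isClosed_singleton
  have hsub : S ⊆ Ici δ ∩ y ⁻¹' {0} := fun s hs => ⟨hlb s hs, hs.2⟩
  have hmem : sInf S ∈ Ici δ ∩ y ⁻¹' {0} := by
    have := csInf_mem_closure hne hbdd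
    have hcl : closure S ⊆ Ici δ ∩ y ⁻¹' {0} := hclosed.closure_subset_iff.mpr hsub
    exact hcl this
  refine ⟨hRpos, hmem.2, ?_⟩
  intro s hs0 hsR
  by_contra hle
  push_neg at hle
  rcases lt_or_eq_of_le hle with hlt | heq
  · -- y s < 0, IVT
    have hcont : ContinuousOn y (Icc 0 s) := hy.mono (fun x hx => hx.1)
    have : (0:ℝ) ∈ Icc (y s) (y 0) := ⟨hlt.le, by rw [h0]; exact hC.le⟩
    obtain ⟨t, ht, hyt⟩ := intermediate_value_Icc' hs0 hcont this
    have ht0 : 0 < t := by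
      rcases lt_or_eq_of_le ht.1 with h | h
      · exact h
      · exfalso; rw [← h] at hyt; rw [h0] at hyt; linarith
    have : sInf S ≤ t := csInf_le hbdd ⟨ht0, hyt⟩
    linarith [ht.2]
  · have hs0' : 0 < s := by
      rcases lt_or_eq_of_le hs0 with h | h
      · exact h
      · exfalso; rw [← h, h0] at heq; linarith
    have : sInf S ≤ s := csInf_le hbdd ⟨hs0', heq⟩
    linarith


/-- Comparison lemma for first positive roots of radial ODE solutions:
if `q1 ≤ q2` then the first positive root of `y1` is ≥ that of `y2`. -/
theorem first_positive_root_comparison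
    (q1 q2 : ℝ → ℝ)
    (hq1c : ContinuousOn q1 (Ici 0)) (hq2c : ContinuousOn q2 (Ici 0))
    (hq1pos : ∀ r ∈ Ici (0:ℝ), 0 < q1 r) (hq2pos : ∀ r ∈ Ici (0:ℝ), 0 < q2 r)
    (hq12 : ∀ r > (0:ℝ), q1 r ≤ q2 r)
    (C : ℝ) (hC : 0 < C)
    (y1 y1' y1'' y2 y2' y2'' : ℝ → ℝ)
    (hy1d : ∀ r ∈ Ici (0:ℝ), HasDerivWithinAt y1 (y1' r) (Ici 0) r)
    (hy1'c : ContinuousOn y1' (Ici 0))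
    (hy1dd : ∀ r > (0:ℝ), HasDerivAt y1' (y1'' r) r)
    (hy2d : ∀ r ∈ Ici (0:ℝ), HasDerivWithinAt y2 (y2' r) (Ici 0) r)
    (hy2'c : ContinuousOn y2' (Ici 0))
    (hy2dd : ∀ r > (0:ℝ), HasDerivAt y2' (y2'' r) r)
    (hode1 : ∀ r > (0:ℝ), y1'' r + (1/r) * y1' r + q1 r * y1 r = 0)
    (hode2 : ∀ r > (0:ℝ), y2'' r + (1/r) * y2' r + q2 r * y2 r = 0)
    (hy1init : y1 0 = C) (hy1'init : y1' 0 = 0)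
    (hy2init : y2 0 = C) (hy2'init : y2' 0 = 0)
    (hroot1 : {r : ℝ | 0 < r ∧ y1 r = 0}.Nonempty)
    (hroot2 : {r : ℝ | 0 < r ∧ y2 r = 0}.Nonempty)
    (R1 R2 : ℝ)
    (hR1 : R1 = sInf {r : ℝ | 0 < r ∧ y1 r = 0})
    (hR2 : R2 = sInf {r : ℝ | 0 < r ∧ y2 r = 0}) :
    R2 ≤ R1 := by
  have hy1c : ContinuousOn y1 (Ici 0) := fun x hx => (hy1d x hx).continuousWithinAt
  have hy2c : ContinuousOn y2 (Ici 0) := fun x hx => (hy2d x hx).continuousWithinAt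
  obtain ⟨hR1pos, hy1R1, hpos1⟩ := firstRoot_props y1 hy1c C hC hy1init hroot1
  obtain ⟨hR2pos, hy2R2, hpos2⟩ := firstRoot_props y2 hy2c C hC hy2init hroot2
  rw [← hR1] at hR1pos hy1R1 hpos1
  rw [← hR2] at hR2pos hy2R2 hpos2
  by_contra hcon
  push_neg at hcon   -- hcon : R1 < R2
  -- y2 is positive on [0, R1]
  have hy2posIcc : ∀ x ∈ Icc (0:ℝ) R1, 0 < y2 x :=
    fun x hx => hpos2 x hx.1 (lt_of_le_of_lt hx.2 hcon)
  -- Step 1 : y1' R1 < 0 via g r = r * y1' r strictly decreasing on [0, R1]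
  have hg : StrictAntiOn (fun r => r * y1' r) (Icc 0 R1) := by
    apply strictAntiOn_of_deriv_neg (convex_Icc 0 R1)
    · exact (continuousOn_id).mul (hy1'c.mono (fun x hx => hx.1))
    · intro x hx
      rw [interior_Icc] at hx
      have hx0 : 0 < x := hx.1
      have hD : HasDerivAt (fun r => r * y1' r) (1 * y1' x + x * y1'' x) x :=
        (hasDerivAt_id x).mul (hy1dd x hx0)
      rw [hD.deriv]
      have hode := hode1 x hx0
      have hy1x : 0 < y1 x := hpos1 x hx0.le hx.2
      have hq : 0 < q1 x := hq1pos x hx0.le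
      have e1 : x * y1'' x + y1' x + x * (q1 x * y1 x) = 0 := by
        field_simp at hode ⊢
        nlinarith [hode, hx0.ne']
      nlinarith [mul_pos (mul_pos hx0 hq) hy1x]
  have hy1'R1 : y1' R1 < 0 := by
    have h01 : (0:ℝ) ∈ Icc (0:ℝ) R1 := ⟨le_refl 0, hR1pos.le⟩
    have hR1m : R1 ∈ Icc (0:ℝ) R1 := ⟨hR1pos.le, le_refl R1⟩
    have := hg h01 hR1m hR1pos
    simp only [zero_mul, hy1'init, mul_zero] at this
    nlinarith
  -- Step 2 : W r = r * (y1' r * y2 r - y1 r * y2' r) is monotone on [0, R1]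
  set W : ℝ → ℝ := fun r => r * (y1' r * y2 r - y1 r * y2' r) with hWdef
  have hWderiv : ∀ x ∈ Ioo (0:ℝ) R1, HasDerivAt W
      (1 * (y1' x * y2 x - y1 x * y2' x) +
        x * ((y1'' x * y2 x + y1' x * y2' x) - (y1' x * y2' x + y1 x * y2'' x))) x := by
    intro x hx
    have hx0 : 0 < x := hx.1
    have hxnh : Ici (0:ℝ) ∈ nhds x := Ici_mem_nhds hx0
    have h1 : HasDerivAt y1 (y1' x) x := (hy1d x hx0.le).hasDerivAt hxnh
    have h2 : HasDerivAt y2 (y2' x) x := (hy2d x hx0.le).hasDerivAt hxnh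
    have h1' : HasDerivAt y1' (y1'' x) x := hy1dd x hx0
    have h2' : HasDerivAt y2' (y2'' x) x := hy2dd x hx0
    exact (hasDerivAt_id x).mul ((h1'.mul h2).sub (h1.mul h2'))
  have hWmono : MonotoneOn W (Icc 0 R1) := by
    apply monotoneOn_of_deriv_nonneg (convex_Icc 0 R1)
    · apply ContinuousOn.mul continuousOn_id
      apply ContinuousOn.sub
      · exact ((hy1'c.mono (fun x hx => hx.1)).mul (hy2c.mono (fun x hx => hx.1)))
      · exact ((hy1c.mono (fun x hx => hx.1)).mul (hy2'c.mono (fun x hx => hx.1)))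
    · intro x hx
      rw [interior_Icc] at hx
      exact ((hWderiv x hx).differentiableAt).differentiableWithinAt
    · intro x hx
      rw [interior_Icc] at hx
      have hx0 : 0 < x := hx.1
      rw [(hWderiv x hx).deriv]
      have ho1 := hode1 x hx0
      have ho2 := hode2 x hx0
      have e1 : x * y1'' x + y1' x + x * (q1 x * y1 x) = 0 := by
        field_simp at ho1 ⊢
        nlinarith [ho1]
      have e2 : x * y2'' x + y2' x + x * (q2 x * y2 x) = 0 := by
        field_simp at ho2 ⊢
        nlinarith [ho2]
      have hy1x : 0 < y1 x := hpos1 x hx0.le hx.2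
      have hy2x : 0 < y2 x := hy2posIcc x ⟨hx0.le, hx.2.le⟩
      have hq : q1 x ≤ q2 x := hq12 x hx0
      have key : 1 * (y1' x * y2 x - y1 x * y2' x) +
          x * ((y1'' x * y2 x + y1' x * y2' x) - (y1' x * y2' x + y1 x * y2'' x)) =
          x * (q2 x - q1 x) * (y1 x * y2 x) := by
        linear_combination (y2 x) * e1 + (-(y1 x)) * e2
      rw [key]
      have : 0 ≤ (q2 x - q1 x) := by linarith
      positivity
  -- Conclude
  have h01 : (0:ℝ) ∈ Icc (0:ℝ) R1 := ⟨le_refl 0, hR1pos.le⟩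
  have hR1m : R1 ∈ Icc (0:ℝ) R1 := ⟨hR1pos.le, le_refl R1⟩
  have hWle := hWmono h01 hR1m hR1pos.le
  have hW0 : W 0 = 0 := by simp [hWdef]
  have hWR1 : W R1 = R1 * (y1' R1 * y2 R1) := by
    simp [hWdef, hy1R1]
  rw [hW0, hWR1] at hWle
  have hy2R1 : 0 < y2 R1 := hy2posIcc R1 hR1m
  nlinarith [mul_pos hR1pos hy2R1, mul_neg_of_pos_of_neg (mul_pos hR1pos hy2R1) hy1'R1]
end

section
/- Let q1, q2 : [0,∞) → ℝ be positive continuous functions with q1(r) ≤ q2(r) for all r > 0, and let C > 0. For i = 1, 2, let y_i : [0,∞) → ℝ be continuously differentiable on [0,∞) and twice differentiable on (0,∞), satisfying y_i''(r) + (1/r)·y_i'(r) + q_i(r)·y_i(r) = 0 for all r > 0, together with y_i(0) = C and y_i'(0) = 0. Assume each y_i has at least one positive root, let R_i := inf{r > 0 : y_i(r) = 0}, and set R := min(R_1, R_2). Then y_1(r) ≥ y_2(r) for all r with 0 < r < R. -/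
open Set

lemma pos_before_first_root (y : ℝ → ℝ) (hc : ContinuousOn y (Ici 0))
    (C : ℝ) (hC : 0 < C) (h0 : y 0 = C) (R : ℝ)
    (hR : R = sInf {r : ℝ | 0 < r ∧ y r = 0}) :
    ∀ s, 0 ≤ s → s < R → 0 < y s := by
  intro s hs0 hsR
  by_contra h
  push_neg at h
  have h0' : (0:ℝ) ∈ Icc (y s) (y 0) := ⟨h, by rw [h0]; exact hC.le⟩
  obtain ⟨t, ht, hyt⟩ := intermediate_value_Icc' hs0 (hc.mono Icc_subset_Ici_self) h0'
  have htpos : 0 < t := by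
    rcases eq_or_lt_of_le ht.1 with heq | hlt
    · exfalso; rw [← heq] at hyt; rw [h0] at hyt; linarith
    · exact hlt
  have hRle : R ≤ t := by
    rw [hR]
    exact csInf_le ⟨0, fun x hx => hx.1.le⟩ ⟨htpos, hyt⟩
  linarith [ht.2]

/-- Pointwise comparison of radial ODE solutions on `(0, min R1 R2)`:
if `q1 ≤ q2` then `y1 ≥ y2` before the first positive roots. -/
theorem radial_solution_comparison
    (q1 q2 : ℝ → ℝ)
    (hq1c : ContinuousOn q1 (Ici 0)) (hq2c : ContinuousOn q2 (Ici 0))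
    (hq1pos : ∀ r ∈ Ici (0:ℝ), 0 < q1 r) (hq2pos : ∀ r ∈ Ici (0:ℝ), 0 < q2 r)
    (hq12 : ∀ r > (0:ℝ), q1 r ≤ q2 r)
    (C : ℝ) (hC : 0 < C)
    (y1 y1' y1'' y2 y2' y2'' : ℝ → ℝ)
    (hy1d : ∀ r ∈ Ici (0:ℝ), HasDerivWithinAt y1 (y1' r) (Ici 0) r)
    (hy1'c : ContinuousOn y1' (Ici 0))
    (hy1dd : ∀ r > (0:ℝ), HasDerivAt y1' (y1'' r) r)
    (hy2d : ∀ r ∈ Ici (0:ℝ), HasDerivWithinAt y2 (y2' r) (Ici 0) r)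
    (hy2'c : ContinuousOn y2' (Ici 0))
    (hy2dd : ∀ r > (0:ℝ), HasDerivAt y2' (y2'' r) r)
    (hode1 : ∀ r > (0:ℝ), y1'' r + (1/r) * y1' r + q1 r * y1 r = 0)
    (hode2 : ∀ r > (0:ℝ), y2'' r + (1/r) * y2' r + q2 r * y2 r = 0)
    (hy1init : y1 0 = C) (hy1'init : y1' 0 = 0)
    (hy2init : y2 0 = C) (hy2'init : y2' 0 = 0)
    (hroot1 : {r : ℝ | 0 < r ∧ y1 r = 0}.Nonempty)
    (hroot2 : {r : ℝ | 0 < r ∧ y2 r = 0}.Nonempty)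
    (R1 R2 : ℝ)
    (hR1 : R1 = sInf {r : ℝ | 0 < r ∧ y1 r = 0})
    (hR2 : R2 = sInf {r : ℝ | 0 < r ∧ y2 r = 0}) :
    ∀ r, 0 < r → r < min R1 R2 → y2 r ≤ y1 r := by
  intro r hr hrR
  rw [lt_min_iff] at hrR
  obtain ⟨hrR1, hrR2⟩ := hrR
  have hy1c : ContinuousOn y1 (Ici 0) := fun x hx => (hy1d x hx).continuousWithinAt
  have hy2c : ContinuousOn y2 (Ici 0) := fun x hx => (hy2d x hx).continuousWithinAt
  have hpos1 := pos_before_first_root y1 hy1c C hC hy1init R1 hR1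
  have hpos2 := pos_before_first_root y2 hy2c C hC hy2init R2 hR2
  -- derivatives at interior points
  have hd1 : ∀ s > (0:ℝ), HasDerivAt y1 (y1' s) s := fun s hs =>
    (hy1d s (le_of_lt hs)).hasDerivAt (Ici_mem_nhds hs)
  have hd2 : ∀ s > (0:ℝ), HasDerivAt y2 (y2' s) s := fun s hs =>
    (hy2d s (le_of_lt hs)).hasDerivAt (Ici_mem_nhds hs)
  set W : ℝ → ℝ := fun t => t * (y1' t * y2 t - y1 t * y2' t) with hW
  have hWd : ∀ s > (0:ℝ), HasDerivAt W
      (s * (q2 s - q1 s) * (y1 s * y2 s)) s := by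
    intro s hs
    have h := ((hasDerivAt_id s).mul
      (((hy1dd s hs).mul (hd2 s hs)).sub ((hd1 s hs).mul (hy2dd s hs)))) 
    simp only [id_eq, Pi.mul_apply, Pi.sub_apply] at h
    replace h : HasDerivAt W _ s := h
    convert h using 1
    have hs' : s ≠ 0 := hs.ne'
    have hinv : s * (1/s) = 1 := by field_simp
    have e1 : s * y1'' s + y1' s + s * (q1 s * y1 s) = 0 := by
      linear_combination s * (hode1 s hs) - y1' s * hinv
    have e2 : s * y2'' s + y2' s + s * (q2 s * y2 s) = 0 := by
      linear_combination s * (hode2 s hs) - y2' s * hinv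
    linear_combination y1 s * e2 - y2 s * e1
  -- W is monotone on [0, r]
  have hWc : ContinuousOn W (Icc 0 r) := by
    apply ContinuousOn.mono _ (Icc_subset_Ici_self : Icc (0:ℝ) r ⊆ Ici 0)
    exact continuousOn_id.mul ((hy1'c.mul hy2c).sub (hy1c.mul hy2'c))
  have hint : interior (Icc (0:ℝ) r) = Ioo 0 r := interior_Icc
  have hWmono : MonotoneOn W (Icc 0 r) := by
    apply monotoneOn_of_deriv_nonneg (convex_Icc 0 r) hWc
    · intro x hx
      rw [hint] at hx
      exact (hWd x hx.1).differentiableAt.differentiableWithinAt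
    · intro x hx
      rw [hint] at hx
      rw [(hWd x hx.1).deriv]
      have hx1 : 0 < y1 x := hpos1 x hx.1.le (lt_trans hx.2 hrR1)
      have hx2 : 0 < y2 x := hpos2 x hx.1.le (lt_trans hx.2 hrR2)
      have hq : 0 ≤ q2 x - q1 x := by linarith [hq12 x hx.1]
      have hx0 := hx.1
      positivity
  have hWnonneg : ∀ s ∈ Icc (0:ℝ) r, 0 ≤ W s := by
    intro s hs
    have h0 : W 0 = 0 := by simp [hW]
    have := hWmono (left_mem_Icc.mpr hr.le) hs hs.1
    linarith [this, h0.le]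
  -- the ratio y1 / y2 is monotone on [0, r]
  have hy2ne : ∀ s ∈ Icc (0:ℝ) r, y2 s ≠ 0 := fun s hs =>
    (hpos2 s hs.1 (lt_of_le_of_lt hs.2 hrR2)).ne'
  set φ : ℝ → ℝ := fun t => y1 t / y2 t with hφ
  have hφc : ContinuousOn φ (Icc 0 r) :=
    (hy1c.mono Icc_subset_Ici_self).div (hy2c.mono Icc_subset_Ici_self) hy2ne
  have hφd : ∀ s ∈ Ioo (0:ℝ) r, HasDerivAt φ
      ((y1' s * y2 s - y1 s * y2' s) / (y2 s)^2) s := by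
    intro s hs
    exact (hd1 s hs.1).div (hd2 s hs.1) (hy2ne s ⟨hs.1.le, hs.2.le⟩)
  have hφmono : MonotoneOn φ (Icc 0 r) := by
    apply monotoneOn_of_deriv_nonneg (convex_Icc 0 r) hφc
    · intro x hx
      rw [hint] at hx
      exact (hφd x hx).differentiableAt.differentiableWithinAt
    · intro x hx
      rw [hint] at hx
      rw [(hφd x hx).deriv]
      have hnum : 0 ≤ y1' x * y2 x - y1 x * y2' x := by
        have hWx := hWnonneg x ⟨hx.1.le, hx.2.le⟩
        simp only [hW] at hWx
        nlinarith [hx.1]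
      positivity
  have h01 : φ 0 = 1 := by
    simp only [hφ, hy1init, hy2init]
    field_simp
  have := hφmono (left_mem_Icc.mpr hr.le) (right_mem_Icc.mpr hr.le) hr.le
  rw [h01] at this
  have hy2r : 0 < y2 r := hpos2 r hr.le hrR2
  rw [le_div_iff₀ hy2r] at this
  linarith
end

section
/- Let R > 0, let q : [0,R) → ℝ be continuous, and let z : [0,R) → ℝ be continuously differentiable on [0,R) and twice differentiable on (0,R), satisfying z''(r) + (1/r)·z'(r) + q(r)·z(r) = 0 for all r ∈ (0,R), with z(0) = 0 and z'(0) = 0. Then z(r) = 0 for all r ∈ [0,R). -/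
open Set

/-- Uniqueness for the radial equation with zero initial data: the only solution of
`z'' + (1/r)·z' + q·z = 0` on `(0,R)` that is C¹ up to `r = 0` with `z(0) = z'(0) = 0`
is the null function. -/
theorem radial_zero_initial_data_unique
    (R : ℝ) (hR : 0 < R) (q z z' z'' : ℝ → ℝ)
    (hqc : ContinuousOn q (Ico 0 R))
    (hzd : ∀ r ∈ Ico (0:ℝ) R, HasDerivWithinAt z (z' r) (Ico 0 R) r)
    (hz'c : ContinuousOn z' (Ico 0 R))
    (hzdd : ∀ r ∈ Ioo (0:ℝ) R, HasDerivAt z' (z'' r) r)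
    (hode : ∀ r ∈ Ioo (0:ℝ) R, z'' r + (1/r) * z' r + q r * z r = 0)
    (hz0 : z 0 = 0) (hz'0 : z' 0 = 0) :
    ∀ r ∈ Ico (0:ℝ) R, z r = 0 := by
  intro b hb
  obtain ⟨hb0, hbR⟩ := hb
  have hsub : Icc (0:ℝ) b ⊆ Ico 0 R := fun x hx => ⟨hx.1, lt_of_le_of_lt hx.2 hbR⟩
  -- continuity of z on Ico 0 R
  have hzc : ContinuousOn z (Ico 0 R) := fun x hx => (hzd x hx).continuousWithinAt
  -- HasDerivAt z at interior points
  have hzD : ∀ s ∈ Ioo (0:ℝ) R, HasDerivAt z (z' s) s := by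
    intro s hs
    exact (hzd s (Ioo_subset_Ico_self hs)).hasDerivAt
      (Filter.mem_of_superset (isOpen_Ioo.mem_nhds hs) Ioo_subset_Ico_self)
  -- bound on q
  obtain ⟨K0, hK0⟩ := isCompact_Icc.exists_bound_of_continuousOn (hqc.mono hsub)
  set K : ℝ := max K0 0 with hKdef
  have hKnn : (0:ℝ) ≤ K := le_max_right _ _
  have hK : ∀ x ∈ Icc (0:ℝ) b, |q x| ≤ K := fun x hx =>
    le_trans (hK0 x hx) (le_max_left _ _)
  -- the auxiliary function u
  set u : ℝ → ℝ := fun s => |z s| + |z' s| with hudef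
  have hunn : ∀ s, 0 ≤ u s := fun s => add_nonneg (abs_nonneg _) (abs_nonneg _)
  have hucont : ContinuousOn u (Icc 0 b) :=
    ((hzc.mono hsub).abs.add (hz'c.mono hsub).abs)
  have huint : ∀ r ∈ Icc (0:ℝ) b, IntervalIntegrable u MeasureTheory.volume 0 r := by
    intro r hr
    exact (hucont.mono (Icc_subset_Icc_right hr.2)).intervalIntegrable_of_Icc hr.1
  -- Step B : z r = ∫₀^r z'
  have hzint : ∀ r ∈ Icc (0:ℝ) b, z r = ∫ s in (0:ℝ)..r, z' s := by
    intro r hr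
    have h1 : ∫ s in (0:ℝ)..r, z' s = z r - z 0 := by
      apply intervalIntegral.integral_eq_sub_of_hasDeriv_right_of_le hr.1
        (hzc.mono ((Icc_subset_Icc_right hr.2).trans hsub))
        (fun x hx => (hzD x ⟨hx.1, lt_of_lt_of_le hx.2 (le_of_lt (lt_of_le_of_lt hr.2 hbR))⟩).hasDerivWithinAt)
        (((hz'c.mono hsub).mono (Icc_subset_Icc_right hr.2)).intervalIntegrable_of_Icc hr.1)
    rw [h1, hz0, sub_zero]
  -- Step A : r * z' r = ∫₀^r -(s * q s * z s)
  have hz'int : ∀ r ∈ Icc (0:ℝ) b, r * z' r = ∫ s in (0:ℝ)..r, -(s * q s * z s) := by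
    intro r hr
    have hcont : ContinuousOn (fun s => s * z' s) (Icc 0 r) :=
      continuousOn_id.mul ((hz'c.mono hsub).mono (Icc_subset_Icc_right hr.2))
    have hderiv : ∀ x ∈ Ioo (0:ℝ) r, HasDerivWithinAt (fun s => s * z' s)
        (-(x * q x * z x)) (Ioi x) x := by
      intro x hx
      have hxR : x ∈ Ioo (0:ℝ) R := ⟨hx.1, lt_of_lt_of_le (lt_of_lt_of_le hx.2 hr.2) (le_of_lt hbR)⟩
      have h := (hasDerivAt_id x).mul (hzdd x hxR)
      have heq : 1 * z' x + x * z'' x = -(x * q x * z x) := by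
        have hx0 : x ≠ 0 := ne_of_gt hxR.1
        have h2 := hode x hxR
        field_simp at h2
        nlinarith [h2]
      simp only [id_eq] at h
      rw [heq] at h
      exact h.hasDerivWithinAt
    have hint : IntervalIntegrable (fun s => -(s * q s * z s)) MeasureTheory.volume 0 r := by
      apply ContinuousOn.intervalIntegrable_of_Icc hr.1
      exact ((continuousOn_id.mul ((hqc.mono hsub).mono (Icc_subset_Icc_right hr.2))).mul
        ((hzc.mono hsub).mono (Icc_subset_Icc_right hr.2))).neg
    have h1 := intervalIntegral.integral_eq_sub_of_hasDeriv_right_of_le hr.1 hcont hderiv hint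
    rw [h1]
    ring
  -- bound on z'
  have hz'b : ∀ r ∈ Icc (0:ℝ) b, |z' r| ≤ K * ∫ s in (0:ℝ)..r, u s := by
    intro r hr
    rcases eq_or_lt_of_le hr.1 with h0 | h0
    · rw [← h0]
      simp [hz'0]
    · have hid := hz'int r hr
      have habs : |r * z' r| ≤ ∫ s in (0:ℝ)..r, |-(s * q s * z s)| := by
        rw [hid]
        exact intervalIntegral.abs_integral_le_integral_abs hr.1
      have hmono : (∫ s in (0:ℝ)..r, |-(s * q s * z s)|) ≤ ∫ s in (0:ℝ)..r, r * K * u s := by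
        apply intervalIntegral.integral_mono_on hr.1
        · apply ContinuousOn.intervalIntegrable_of_Icc hr.1
          exact (((continuousOn_id.mul ((hqc.mono hsub).mono (Icc_subset_Icc_right hr.2))).mul
            ((hzc.mono hsub).mono (Icc_subset_Icc_right hr.2))).neg).abs
        · exact ((continuousOn_const.mul (hucont.mono (Icc_subset_Icc_right hr.2)))).intervalIntegrable_of_Icc hr.1
        · intro s hs
          have h1 : |(-(s * q s * z s))| = |s| * |q s| * |z s| := by
            rw [abs_neg, abs_mul, abs_mul]
          rw [h1, abs_of_nonneg hs.1]
          have hqs := hK s ⟨hs.1, le_trans hs.2 hr.2⟩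
          have hus : |z s| ≤ u s := le_add_of_nonneg_right (abs_nonneg _)
          have h2 : s * |q s| ≤ r * K :=
            mul_le_mul hs.2 hqs (abs_nonneg _) hr.1
          calc s * |q s| * |z s| ≤ r * K * |z s| :=
                mul_le_mul_of_nonneg_right h2 (abs_nonneg _)
            _ ≤ r * K * u s := by
                apply mul_le_mul_of_nonneg_left hus
                positivity
      have hfin : |r * z' r| ≤ r * K * ∫ s in (0:ℝ)..r, u s := by
        calc |r * z' r| ≤ ∫ s in (0:ℝ)..r, |-(s * q s * z s)| := habs
          _ ≤ ∫ s in (0:ℝ)..r, r * K * u s := hmono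
          _ = r * K * ∫ s in (0:ℝ)..r, u s := by
              rw [← intervalIntegral.integral_const_mul]
      rw [abs_mul, abs_of_pos h0] at hfin
      have := (mul_le_mul_iff_right₀ h0).mp (by linarith [hfin] : r * |z' r| ≤ r * (K * ∫ s in (0:ℝ)..r, u s))
      exact this
  -- bound on z
  have hzb : ∀ r ∈ Icc (0:ℝ) b, |z r| ≤ ∫ s in (0:ℝ)..r, u s := by
    intro r hr
    rw [hzint r hr]
    calc |∫ s in (0:ℝ)..r, z' s| ≤ ∫ s in (0:ℝ)..r, |z' s| :=
          intervalIntegral.abs_integral_le_integral_abs hr.1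
      _ ≤ ∫ s in (0:ℝ)..r, u s := by
          apply intervalIntegral.integral_mono_on hr.1
          · exact (((hz'c.mono hsub).mono (Icc_subset_Icc_right hr.2)).abs).intervalIntegrable_of_Icc hr.1
          · exact huint r hr
          · exact fun s _ => le_add_of_nonneg_left (abs_nonneg _)
  -- Gronwall
  set G : ℝ → ℝ := fun r => ∫ s in (0:ℝ)..r, u s with hGdef
  have hGnn : ∀ r ∈ Icc (0:ℝ) b, 0 ≤ G r := by
    intro r hr
    exact intervalIntegral.integral_nonneg hr.1 (fun s _ => hunn s)
  have hGcont : ContinuousOn G (Icc 0 b) := by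
    have := intervalIntegral.continuousOn_primitive_interval (f := u) (a := (0:ℝ)) (b := b)
      (μ := MeasureTheory.volume) ?_
    · rwa [uIcc_of_le hb0] at this
    · rw [uIcc_of_le hb0]
      exact (hucont.mono (le_refl _)).integrableOn_Icc
  have hGd : ∀ x ∈ Ico (0:ℝ) b, HasDerivWithinAt G (u x) (Ici x) x := by
    intro x hx
    have hmem : Icc (0:ℝ) b ∈ nhdsWithin x (Ici x) := Icc_mem_nhdsGE_of_mem hx
    have hmem' : Icc (0:ℝ) b ∈ nhdsWithin x (Ioi x) :=
      nhdsWithin_mono x Ioi_subset_Ici_self hmem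
    apply intervalIntegral.integral_hasDerivWithinAt_right (t := Ioi x)
      (huint x ⟨hx.1, le_of_lt hx.2⟩)
      ⟨Icc 0 b, hmem', (hucont.aestronglyMeasurable measurableSet_Icc)⟩
    exact (hucont.continuousWithinAt ⟨hx.1, le_of_lt hx.2⟩).mono_of_mem_nhdsWithin hmem'
  have hbound : ∀ x ∈ Ico (0:ℝ) b, ‖u x‖ ≤ (K + 1) * ‖G x‖ + 0 := by
    intro x hx
    have hxI : x ∈ Icc (0:ℝ) b := ⟨hx.1, le_of_lt hx.2⟩
    rw [Real.norm_eq_abs, Real.norm_eq_abs, abs_of_nonneg (hunn x), abs_of_nonneg (hGnn x hxI),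
      add_zero]
    have h1 := hzb x hxI
    have h2 := hz'b x hxI
    have hGx : G x = ∫ s in (0:ℝ)..x, u s := rfl
    simp only [hudef]
    nlinarith [hGnn x hxI]
  have hG0 : ‖G 0‖ ≤ 0 := by
    simp [hGdef]
  have := norm_le_gronwallBound_of_norm_deriv_right_le hGcont hGd hG0 hbound b
    ⟨hb0, le_refl b⟩
  rw [gronwallBound_ε0_δ0] at this
  have hGb : G b = 0 := le_antisymm (by simpa using (abs_le.mp (by simpa using this)).2)
    (hGnn b ⟨hb0, le_refl b⟩)
  have hzbb := hzb b ⟨hb0, le_refl b⟩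
  have : |z b| ≤ 0 := by rw [← hGb]; exact hzbb
  exact abs_eq_zero.mp (le_antisymm this (abs_nonneg _))
end

section
/- Let α : [0,∞) → ℝ be continuous with 0 < κ₁ ≤ α(r) ≤ κ₂ for all r ≥ 0, let C > 0, and let 0 < D ≤ d₂. Let y_D and y_{d₂} be continuously differentiable on [0,∞) and twice differentiable on (0,∞), satisfying D·(y_D''(r) + (1/r)·y_D'(r)) + α(r)·y_D(r) = 0 and d₂·(y_{d₂}''(r) + (1/r)·y_{d₂}'(r)) + α(r)·y_{d₂}(r) = 0 for all r > 0, with y_D(0) = y_{d₂}(0) = C and y_D'(0) = y_{d₂}'(0) = 0. Assume each has at least one positive root, and let R*(D) and R*(d₂) denote their respective first positive roots. Then R*(d₂) ≥ R*(D). -/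
open Set

lemma firstRoot_spec (y : ℝ → ℝ) (hy : ContinuousOn y (Ici 0)) (C : ℝ) (hC : 0 < C)
    (h0 : y 0 = C) (hne : {r : ℝ | 0 < r ∧ y r = 0}.Nonempty) (R : ℝ)
    (hR : R = sInf {r : ℝ | 0 < r ∧ y r = 0}) :
    0 < R ∧ y R = 0 ∧ ∀ r, 0 ≤ r → r < R → 0 < y r := by
  set S := {r : ℝ | 0 < r ∧ y r = 0} with hS
  have hSclosed : IsClosed S := by
    have h1 : IsClosed (Ici (0:ℝ) ∩ y ⁻¹' {0}) :=
      hy.preimage_isClosed_of_isClosed isClosed_Ici isClosed_singleton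
    have : S = Ici (0:ℝ) ∩ y ⁻¹' {0} := by
      ext r
      simp only [hS, mem_setOf_eq, mem_inter_iff, mem_Ici, mem_preimage, mem_singleton_iff]
      constructor
      · rintro ⟨h1, h2⟩; exact ⟨h1.le, h2⟩
      · rintro ⟨h1, h2⟩
        refine ⟨lt_of_le_of_ne h1 ?_, h2⟩
        rintro rfl; rw [h0] at h2; linarith
    rwa [this]
  have hbdd : BddBelow S := ⟨0, fun r hr => hr.1.le⟩
  have hmem : R ∈ S := hR ▸ hSclosed.csInf_mem hne hbdd
  refine ⟨hmem.1, hmem.2, fun r hr0 hrR => ?_⟩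
  by_contra hle
  push_neg at hle
  have hne0 : y r ≠ 0 := by
    intro h
    have : r ∈ S := ⟨lt_of_le_of_ne hr0 (by rintro rfl; rw [h0] at h; linarith), h⟩
    have := hR ▸ csInf_le hbdd this
    linarith
  have hlt : y r < 0 := lt_of_le_of_ne hle hne0
  have hsub : Icc (0:ℝ) r ⊆ Ici 0 := Icc_subset_Ici_self
  have := intermediate_value_Icc' hr0 (hy.mono hsub)
  have h0mem : (0:ℝ) ∈ Icc (y r) (y 0) := by rw [h0]; exact ⟨hlt.le, hC.le⟩
  obtain ⟨c, hc, hyc⟩ := this h0mem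
  have hc0 : 0 < c := by
    rcases lt_or_eq_of_le hc.1 with h | h
    · exact h
    · exfalso; rw [← h, h0] at hyc; linarith
  have : c ∈ S := ⟨hc0, hyc⟩
  have := hR ▸ csInf_le hbdd this
  linarith [hc.2]

/-- The spreading-vanishing threshold for diffusion coefficient `D ≤ d₂` is bounded
above by the threshold with diffusion `d₂`: `R*(d₂) ≥ R*(D)`. -/
theorem threshold_bound_by_max_diffusion
    (α : ℝ → ℝ) (hαc : ContinuousOn α (Ici 0))
    (κ₁ κ₂ : ℝ) (hκ₁ : 0 < κ₁)
    (hα : ∀ r ∈ Ici (0:ℝ), κ₁ ≤ α r ∧ α r ≤ κ₂)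
    (C : ℝ) (hC : 0 < C)
    (D d₂ : ℝ) (hD : 0 < D) (hDd₂ : D ≤ d₂)
    (yD yD' yD'' yd yd' yd'' : ℝ → ℝ)
    (hyDd : ∀ r ∈ Ici (0:ℝ), HasDerivWithinAt yD (yD' r) (Ici 0) r)
    (hyD'c : ContinuousOn yD' (Ici 0))
    (hyDdd : ∀ r > (0:ℝ), HasDerivAt yD' (yD'' r) r)
    (hydd : ∀ r ∈ Ici (0:ℝ), HasDerivWithinAt yd (yd' r) (Ici 0) r)
    (hyd'c : ContinuousOn yd' (Ici 0))
    (hyddd : ∀ r > (0:ℝ), HasDerivAt yd' (yd'' r) r)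
    (hodeD : ∀ r > (0:ℝ), D * (yD'' r + (1/r) * yD' r) + α r * yD r = 0)
    (hoded : ∀ r > (0:ℝ), d₂ * (yd'' r + (1/r) * yd' r) + α r * yd r = 0)
    (hyDinit : yD 0 = C) (hyD'init : yD' 0 = 0)
    (hydinit : yd 0 = C) (hyd'init : yd' 0 = 0)
    (hrootD : {r : ℝ | 0 < r ∧ yD r = 0}.Nonempty)
    (hrootd : {r : ℝ | 0 < r ∧ yd r = 0}.Nonempty)
    (RD Rd : ℝ)
    (hRD : RD = sInf {r : ℝ | 0 < r ∧ yD r = 0})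
    (hRd : Rd = sInf {r : ℝ | 0 < r ∧ yd r = 0}) :
    RD ≤ Rd := by
  by_contra hcon
  push_neg at hcon  -- Rd < RD
  have hd₂ : 0 < d₂ := lt_of_lt_of_le hD hDd₂
  have hyDc : ContinuousOn yD (Ici 0) := fun r hr => (hyDd r hr).continuousWithinAt
  have hydc : ContinuousOn yd (Ici 0) := fun r hr => (hydd r hr).continuousWithinAt
  obtain ⟨hRDpos, hyDRD, hyDpos⟩ := firstRoot_spec yD hyDc C hC hyDinit hrootD RD hRD
  obtain ⟨hRdpos, hydRd, hydpos⟩ := firstRoot_spec yd hydc C hC hydinit hrootd Rd hRd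
  -- yD positive on [0, Rd]
  have hyDpos' : ∀ r, 0 ≤ r → r ≤ Rd → 0 < yD r :=
    fun r h0 h1 => hyDpos r h0 (lt_of_le_of_lt h1 hcon)
  -- upgrade derivatives to HasDerivAt for r > 0
  have hyD_at : ∀ r > (0:ℝ), HasDerivAt yD (yD' r) r :=
    fun r hr => (hyDd r hr.le).hasDerivAt (Ici_mem_nhds hr)
  have hyd_at : ∀ r > (0:ℝ), HasDerivAt yd (yd' r) r :=
    fun r hr => (hydd r hr.le).hasDerivAt (Ici_mem_nhds hr)
  -- the Wronskian-type function
  set W : ℝ → ℝ := fun r => r * (yd' r * yD r - yd r * yD' r) with hWdef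
  have hW0 : W 0 = 0 := by simp [hWdef]
  have hWderiv : ∀ r > (0:ℝ), HasDerivAt W (r * α r * (1/D - 1/d₂) * (yd r * yD r)) r := by
    intro r hr
    have hu : HasDerivAt (fun s => yd' s * yD s - yd s * yD' s)
        ((yd'' r * yD r + yd' r * yD' r) - (yd' r * yD' r + yd r * yD'' r)) r :=
      ((hyddd r hr).mul (hyD_at r hr)).sub ((hyd_at r hr).mul (hyDdd r hr))
    have hw : HasDerivAt W
        (1 * (yd' r * yD r - yd r * yD' r) +
          r * ((yd'' r * yD r + yd' r * yD' r) - (yd' r * yD' r + yd r * yD'' r))) r :=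
      (hasDerivAt_id r).mul hu
    convert hw using 1
    have h1 := hodeD r hr
    have h2 := hoded r hr
    have hrne : r ≠ 0 := ne_of_gt hr
    have hDne : D ≠ 0 := ne_of_gt hD
    have hd₂ne : d₂ ≠ 0 := ne_of_gt hd₂
    have e1 : yD'' r = -(1/r) * yD' r - (α r / D) * yD r := by
      field_simp at h1 ⊢
      linarith
    have e2 : yd'' r = -(1/r) * yd' r - (α r / d₂) * yd r := by
      field_simp at h2 ⊢
      linarith
    rw [e1, e2]
    field_simp
    ring
  -- W is monotone on [0, Rd]
  have hWcont : ContinuousOn W (Icc 0 Rd) := by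
    apply ContinuousOn.mono _ (Icc_subset_Ici_self : Icc (0:ℝ) Rd ⊆ Ici 0)
    exact continuousOn_id.mul ((hyd'c.mul hyDc).sub (hydc.mul hyD'c))
  have hint : interior (Icc (0:ℝ) Rd) = Ioo 0 Rd := interior_Icc
  have hWmono : MonotoneOn W (Icc 0 Rd) := by
    apply monotoneOn_of_deriv_nonneg (convex_Icc 0 Rd) hWcont
    · rw [hint]
      exact fun x hx => ((hWderiv x hx.1).differentiableAt).differentiableWithinAt
    · rw [hint]
      intro x hx
      rw [(hWderiv x hx.1).deriv]
      have hαx := (hα x (le_of_lt hx.1)).1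
      have h1 : 0 < x * α x := mul_pos hx.1 (lt_of_lt_of_le hκ₁ hαx)
      have h2 : (0:ℝ) ≤ 1/D - 1/d₂ := by
        rw [sub_nonneg]
        exact one_div_le_one_div_of_le hD hDd₂
      have h3 : 0 < yd x * yD x :=
        mul_pos (hydpos x hx.1.le hx.2) (hyDpos' x hx.1.le hx.2.le)
      positivity
  have hWnonneg : ∀ x ∈ Ioo (0:ℝ) Rd, 0 ≤ W x := by
    intro x hx
    have := hWmono (left_mem_Icc.mpr hRdpos.le) ⟨hx.1.le, hx.2.le⟩ hx.1.le
    rwa [hW0] at this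
  -- g = yd / yD is monotone on [0, Rd]
  set g : ℝ → ℝ := fun r => yd r / yD r with hgdef
  have hgcont : ContinuousOn g (Icc 0 Rd) :=
    (hydc.mono Icc_subset_Ici_self).div (hyDc.mono Icc_subset_Ici_self)
      (fun x hx => ne_of_gt (hyDpos' x hx.1 hx.2))
  have hgderiv : ∀ x ∈ Ioo (0:ℝ) Rd, HasDerivAt g
      ((yd' x * yD x - yd x * yD' x) / (yD x)^2) x := by
    intro x hx
    exact (hyd_at x hx.1).div (hyD_at x hx.1) (ne_of_gt (hyDpos' x hx.1.le hx.2.le))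
  have hgmono : MonotoneOn g (Icc 0 Rd) := by
    apply monotoneOn_of_deriv_nonneg (convex_Icc 0 Rd) hgcont
    · rw [hint]
      exact fun x hx => ((hgderiv x hx).differentiableAt).differentiableWithinAt
    · rw [hint]
      intro x hx
      rw [(hgderiv x hx).deriv]
      have hWx := hWnonneg x hx
      have hnum : 0 ≤ yd' x * yD x - yd x * yD' x := by
        have : W x = x * (yd' x * yD x - yd x * yD' x) := rfl
        nlinarith [hx.1]
      positivity
  have hg0 : g 0 = 1 := by
    simp only [hgdef, hydinit, hyDinit]
    field_simp
  have hgRd : g Rd = 0 := by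
    simp [hgdef, hydRd]
  have := hgmono (left_mem_Icc.mpr hRdpos.le) (right_mem_Icc.mpr hRdpos.le) hRdpos.le
  rw [hg0, hgRd] at this
  linarith
end

section
/- Let d₂ > 0, 0 < ε ≤ 1, h > 0, k > 0, and let i⁰ and i be real numbers with 1 ≤ i⁰ ≤ i. Let D and p be real numbers with 0 < D ≤ d₂ and ε < p. If k ≤ ε·h²·i⁰ / (d₂·(2·i⁰ + 1 − ε)), then 1 − (k·D/(h²·p))·(2 + (1 − p)/i) ≥ 0. -/
/-- Nonnegativity of the coefficient `1 − (kD/(h²p))·(2 + (1−p)/i)` at the last interior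
grid point of the front-tracking scheme under the time-step restriction
`k ≤ ε·h²·i⁰/(d₂·(2i⁰ + 1 − ε))`. -/
theorem front_tracking_last_point_coefficient_nonneg
    (d₂ ε h k i₀ i D p : ℝ)
    (hd₂ : 0 < d₂) (hε : 0 < ε) (hε1 : ε ≤ 1)
    (hh : 0 < h) (hk : 0 < k)
    (hi₀ : 1 ≤ i₀) (hi : i₀ ≤ i)
    (hD : 0 < D) (hDd₂ : D ≤ d₂)
    (hp : ε < p)
    (hkbound : k ≤ ε * h^2 * i₀ / (d₂ * (2 * i₀ + 1 - ε))) :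
    0 ≤ 1 - (k * D / (h^2 * p)) * (2 + (1 - p) / i) := by
  have hi0 : (0:ℝ) < i := by linarith
  have hp0 : (0:ℝ) < p := hε.trans hp
  have hden : (0:ℝ) < 2 * i₀ + 1 - ε := by linarith
  have hh2 : (0:ℝ) < h ^ 2 := by positivity
  have hkD : k * D ≤ ε * h ^ 2 * i₀ / (2 * i₀ + 1 - ε) := by
    have h1 : k * D ≤ (ε * h ^ 2 * i₀ / (d₂ * (2 * i₀ + 1 - ε))) * d₂ :=
      mul_le_mul hkbound hDd₂ hD.le (by positivity)
    calc k * D ≤ _ := h1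
      _ = ε * h ^ 2 * i₀ / (2 * i₀ + 1 - ε) := by
          field_simp
  have hA : 2 + (1 - p) / i = (2 * i + 1 - p) / i := by
    field_simp
    ring
  rw [hA]
  rcases le_or_gt (2 * i + 1 - p) 0 with hA0 | hA0
  · have h2 : (k * D / (h ^ 2 * p)) * ((2 * i + 1 - p) / i) ≤ 0 :=
      mul_nonpos_of_nonneg_of_nonpos (by positivity)
        (div_nonpos_of_nonpos_of_nonneg hA0 hi0.le)
    linarith
  · have key : ε * i₀ * (2 * i + 1 - p) ≤ p * (2 * i₀ + 1 - ε) * i := by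
      rcases le_or_gt p 1 with hP | hP
      · nlinarith [mul_nonneg (mul_nonneg hε.le (by linarith : (0:ℝ) ≤ 1 - p)) (by linarith : (0:ℝ) ≤ i - i₀),
          mul_nonneg hi0.le (mul_nonneg (by linarith : (0:ℝ) ≤ p - ε) (by linarith : (0:ℝ) ≤ 2 * i₀ + 1))]
      · nlinarith [mul_nonneg (mul_nonneg (by linarith : (0:ℝ) ≤ p - 1) hden.le) hi0.le,
          mul_nonneg (by linarith : (0:ℝ) ≤ 1 - ε) hi0.le,
          mul_nonneg (mul_nonneg (by linarith : (0:ℝ) ≤ 1 - ε) (by linarith : (0:ℝ) ≤ i₀)) hi0.le,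
          mul_nonneg (mul_nonneg hε.le (by linarith : (0:ℝ) ≤ i₀)) (by linarith : (0:ℝ) ≤ p - 1)]
    have hmain : k * D * (2 * i + 1 - p) ≤ h ^ 2 * p * i := by
      have h3 : k * D * (2 * i + 1 - p) ≤ (ε * h ^ 2 * i₀ / (2 * i₀ + 1 - ε)) * (2 * i + 1 - p) :=
        mul_le_mul_of_nonneg_right hkD hA0.le
      have h4 : (ε * h ^ 2 * i₀ / (2 * i₀ + 1 - ε)) * (2 * i + 1 - p) ≤ h ^ 2 * p * i := by
        rw [div_mul_eq_mul_div, div_le_iff₀ hden]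
        nlinarith [mul_le_mul_of_nonneg_left key hh2.le]
      linarith
    have h5 : (k * D / (h ^ 2 * p)) * ((2 * i + 1 - p) / i) ≤ 1 := by
      rw [div_mul_div_comm, div_le_one (by positivity)]
      calc k * D * (2 * i + 1 - p) ≤ h ^ 2 * p * i := hmain
        _ = h ^ 2 * p * i := rfl
    linarith
end

section
/- Let h > 0, p > 0, and let x₁ ∈ ℝ; set x₀ := x₁ − h and x₂ := x₁ + p·h. Let P : ℝ → ℝ be a polynomial function of degree at most 2 with P(x₀) = a, P(x₁) = b, and P(x₂) = 0. Then the first derivative of P at the right endpoint satisfies P'(x₂) = (1/h)·((p/(p+1))·a − ((p+1)/p)·b). -/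
/-- First derivative at the front node of the quadratic Lagrange interpolant through
`(x₁−h, a)`, `(x₁, b)`, `(x₁+p·h, 0)`:  `P'(x₂) = (1/h)·((p/(p+1))·a − ((p+1)/p)·b)`. -/
theorem lagrange_first_derivative_at_front
    (h p a b x₁ : ℝ) (hh : 0 < h) (hp : 0 < p)
    (P : Polynomial ℝ) (hdeg : P.degree ≤ 2)
    (h₀ : P.eval (x₁ - h) = a) (h₁ : P.eval x₁ = b)
    (h₂ : P.eval (x₁ + p * h) = 0) :
    (Polynomial.derivative P).eval (x₁ + p * h) =
      (1 / h) * ((p / (p + 1)) * a - ((p + 1) / p) * b) := by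
  have hnd : P.natDegree ≤ 2 := Polynomial.natDegree_le_iff_degree_le.mpr hdeg
  have hnd3 : P.natDegree < 3 := Nat.lt_succ_of_le hnd
  have hdnd : (Polynomial.derivative P).natDegree < 2 := by
    have := Polynomial.natDegree_derivative_le P
    omega
  have ev : ∀ x : ℝ, P.eval x = P.coeff 0 + P.coeff 1 * x + P.coeff 2 * x ^ 2 := by
    intro x
    rw [Polynomial.eval_eq_sum_range' hnd3]
    simp only [Finset.sum_range_succ, Finset.sum_range_zero, pow_zero, pow_one]
    ring
  have evd : (Polynomial.derivative P).eval (x₁ + p * h)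
      = P.coeff 1 + 2 * P.coeff 2 * (x₁ + p * h) := by
    rw [Polynomial.eval_eq_sum_range' hdnd]
    simp only [Finset.sum_range_succ, Finset.sum_range_zero, Polynomial.coeff_derivative,
      pow_zero, pow_one]
    push_cast
    ring
  rw [ev] at h₀ h₁ h₂
  rw [evd]
  have hh' : h ≠ 0 := hh.ne'
  have hp' : p ≠ 0 := hp.ne'
  have hp1 : p + 1 ≠ 0 := by positivity
  field_simp
  nlinarith [h₀, h₁, h₂, sq_nonneg h, sq_nonneg p, mul_pos hh hp]
end
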